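/- Let Λ be a group acting transitively on the flags of a regular incidence complex K of rank n with base flag Φ = {F₀,...,F_{n-1}}, and for each i let R_i be the stabilizer in Λ of Φ \ {F_i}. Then Λ is generated by R₀,...,R_{n-1}. -/

import Mathlib

universe u

variable {α : Type u}

/-- A ranked partial order `(α, ≤)` with rank function `rk` is an incidence complex of
rank `n`: ranks run from `-1` to `n` and are strictly monotone, there are unique minimal
and maximal faces, every flag (maximal chain) contains a face of each rank `-1,…,n` (hence
has exactly `n+2` faces), the complex is strongly flag-connected, and between any two
incident faces of ranks `j-1` and `j+1` there are at least two faces of rank `j`. -/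
structure IsIncidenceComplex (n : ℕ) [PartialOrder α] (rk : α → ℤ) : Prop where
  rk_strictMono : ∀ {F G : α}, F < G → rk F < rk G
  rk_range : ∀ F : α, -1 ≤ rk F ∧ rk F ≤ n
  exists_bot : ∃ B : α, rk B = -1 ∧ ∀ F : α, B ≤ F
  exists_top : ∃ T : α, rk T = n ∧ ∀ F : α, F ≤ T
  flag_rk : ∀ Φ : Set α, IsMaxChain (· ≤ ·) Φ → ∀ j : ℤ, -1 ≤ j → j ≤ n →
    ∃ F ∈ Φ, rk F = j
  strongly_connected : ∀ Φ Ψ : Set α, IsMaxChain (· ≤ ·) Φ → IsMaxChain (· ≤ ·) Ψ →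
    Relation.ReflTransGen
      (fun A B => IsMaxChain (· ≤ ·) A ∧ IsMaxChain (· ≤ ·) B ∧ Φ ∩ Ψ ⊆ A ∧ Φ ∩ Ψ ⊆ B ∧
        ∃ F G, F ∈ A ∧ G ∈ B ∧ F ≠ G ∧ A \ {F} = B \ {G}) Φ Ψ
  diamond_ge_two : ∀ F G : α, F < G → rk G = rk F + 2 →
    ∃ H₁ H₂ : α, H₁ ≠ H₂ ∧ F < H₁ ∧ H₁ < G ∧ F < H₂ ∧ H₂ < G

/-- Two flags are `i`-adjacent when they differ in exactly one face, of rank `i`. -/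
def IAdjacent [PartialOrder α] (rk : α → ℤ) (i : ℤ) (Φ Ψ : Set α) : Prop :=
  ∃ F G, F ∈ Φ ∧ G ∈ Ψ ∧ F ≠ G ∧ rk F = i ∧ rk G = i ∧ Φ \ {F} = Ψ \ {G}

/-- The group of order automorphisms of `α`, as a subgroup of the permutations of `α`. -/
def orderAutGroup (α : Type u) [PartialOrder α] : Subgroup (Equiv.Perm α) where
  carrier := {φ | ∀ a b : α, φ a ≤ φ b ↔ a ≤ b}
  one_mem' := fun _ _ => Iff.rfl
  mul_mem' := by
    intro f g hf hg a b
    rw [Equiv.Perm.mul_apply, Equiv.Perm.mul_apply]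
    exact (hf (g a) (g b)).trans (hg a b)
  inv_mem' := by
    intro f hf a b
    conv_rhs => rw [← f.apply_symm_apply a, ← f.apply_symm_apply b]
    exact (hf _ _).symm

/-- `Λ` is a flag-transitive group of automorphisms. -/
def FlagTransitive [PartialOrder α] (Λ : Subgroup (Equiv.Perm α)) : Prop :=
  ∀ Φ Ψ : Set α, IsMaxChain (· ≤ ·) Φ → IsMaxChain (· ≤ ·) Ψ → ∃ γ ∈ Λ, γ '' Φ = Ψ

/-- The elementwise stabilizer in `Λ` of a set `Ω` of faces. -/
def stabOf [PartialOrder α] (Λ : Subgroup (Equiv.Perm α)) (Ω : Set α) :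
    Subgroup (Equiv.Perm α) where
  carrier := {γ | γ ∈ Λ ∧ ∀ x ∈ Ω, γ x = x}
  one_mem' := ⟨Λ.one_mem, fun _ _ => rfl⟩
  mul_mem' := by
    intro f g hf hg
    refine ⟨Λ.mul_mem hf.1 hg.1, fun x hx => ?_⟩
    rw [Equiv.Perm.mul_apply, hg.2 x hx, hf.2 x hx]
  inv_mem' := by
    intro f hf
    refine ⟨Λ.inv_mem hf.1, fun x hx => ?_⟩
    simpa using (congrArg (⇑f⁻¹) (hf.2 x hx)).symm

/-- The distinguished subgroup `R_i` of `Λ` relative to a base flag enumerated by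
`F : Fin n → α`: the elements of `Λ` fixing every base face `F j` with `j ≠ i`.  For
`i ∉ {0,…,n-1}` (e.g. `i = -1` or `i = n`) this is the stabilizer of the base flag. -/
def distinguishedSubgroup [PartialOrder α] {n : ℕ} (Λ : Subgroup (Equiv.Perm α))
    (F : Fin n → α) (i : ℤ) : Subgroup (Equiv.Perm α) :=
  stabOf Λ {x | ∃ j : Fin n, (j : ℤ) ≠ i ∧ x = F j}

/-!
Strong flag-connectedness joins the base flag `Φ` to `γ '' Φ` by a path of adjacent flags, and
by induction along the path each of its flags is `δ '' Φ` with `δ` in the join `N` of the `R i`.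
For the step from `δ '' Φ` to an adjacent flag `Ψ` differing in the face `X`, flag-transitivity
gives `ε ∈ Λ` mapping `Φ` onto `δ⁻¹ '' Ψ`, which shares with `Φ` every face except `δ⁻¹ X`.
Automorphisms preserve ranks along flags, and a flag has one face of each rank, so `ε` fixes every
base face of rank `≠ rk (δ⁻¹ X)`; thus `ε ∈ N` and `δ * ε` maps `Φ` onto `Ψ`. Finally
`δ⁻¹ * γ` stabilizes `Φ`, so it fixes every base face and lies in `R 0`.
-/

namespace orderAutGroup

variable [PartialOrder α] {γ : Equiv.Perm α}

def toOrderIso (hγ : γ ∈ orderAutGroup α) : α ≃o α where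
  toEquiv := γ
  map_rel_iff' := hγ _ _

@[simp]
theorem coe_toOrderIso (hγ : γ ∈ orderAutGroup α) : ⇑(toOrderIso hγ) = γ := rfl

end orderAutGroup

namespace IsIncidenceComplex

variable [PartialOrder α] {n : ℕ} {rk : α → ℤ} {C : Set α} {X Y : α}

theorem lt_of_rk_lt (h : IsIncidenceComplex n rk) (hC : IsChain (· ≤ ·) C) (hX : X ∈ C)
    (hY : Y ∈ C) (hr : rk X < rk Y) : X < Y := by
  rcases hC.total hX hY with hle | hle
  · exact hle.lt_of_ne (by rintro rfl; exact lt_irrefl _ hr)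
  · rcases hle.eq_or_lt with rfl | hlt
    · exact absurd hr (lt_irrefl _)
    · exact absurd hr (h.rk_strictMono hlt).asymm

theorem eq_of_rk_eq (h : IsIncidenceComplex n rk) (hC : IsChain (· ≤ ·) C) (hX : X ∈ C)
    (hY : Y ∈ C) (hr : rk X = rk Y) : X = Y := by
  rcases hC.total hX hY with hle | hle
  · exact hle.eq_or_lt.resolve_right fun hlt => (h.rk_strictMono hlt).ne hr
  · exact (hle.eq_or_lt.resolve_right fun hlt => (h.rk_strictMono hlt).ne' hr).symm

theorem rk_le_rk_apply (h : IsIncidenceComplex n rk) (e : α ≃o α)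
    (hC : IsMaxChain (· ≤ ·) C) (hX : X ∈ C) : rk X ≤ rk (e X) := by
  suffices ∀ j, -1 ≤ j → ∀ X ∈ C, rk X = j → rk X ≤ rk (e X) from
    this _ (h.rk_range X).1 X hX rfl
  intro j hj
  induction j, hj using Int.leInduction with
  | base => exact fun X _ hX => hX ▸ (h.rk_range (e X)).1
  | succ j hj ih =>
    intro X hX hXj
    obtain ⟨Y, hY, hYj⟩ := h.flag_rk C hC j hj (by linarith [(h.rk_range X).2])
    have hYX : Y < X := h.lt_of_rk_lt hC.1 hY hX (by omega)
    have := h.rk_strictMono (e.strictMono hYX)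
    linarith [ih Y hY hYj]

theorem rk_apply (h : IsIncidenceComplex n rk) (e : α ≃o α) (hC : IsMaxChain (· ≤ ·) C)
    (hX : X ∈ C) : rk (e X) = rk X := by
  refine le_antisymm ?_ (h.rk_le_rk_apply e hC hX)
  simpa using h.rk_le_rk_apply e.symm (hC.image e) (Set.mem_image_of_mem e hX)

theorem apply_eq_self_of_mem (h : IsIncidenceComplex n rk) (e : α ≃o α)
    (hC : IsMaxChain (· ≤ ·) C) (hX : X ∈ C) {D : Set α} (hD : IsChain (· ≤ ·) D)
    (hXD : X ∈ D) (heX : e X ∈ D) : e X = X :=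
  h.eq_of_rk_eq hD heX hXD (h.rk_apply e hC hX)

end IsIncidenceComplex

theorem stabOf_le_stabOf [PartialOrder α] (Λ : Subgroup (Equiv.Perm α)) {Ω Ω' : Set α}
    (hΩ : Ω' ⊆ Ω) : stabOf Λ Ω ≤ stabOf Λ Ω' :=
  fun _ hγ => ⟨hγ.1, fun x hx => hγ.2 x (hΩ hx)⟩

section Distinguished

open Set

variable [PartialOrder α] {n : ℕ} {Λ : Subgroup (Equiv.Perm α)} {F : Fin n → α}

theorem iSup_distinguishedSubgroup_le :
    ⨆ j : Fin n, distinguishedSubgroup Λ F j ≤ Λ :=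
  iSup_le fun _ _ hγ => hγ.1

theorem distinguishedSubgroup_le_iSup (hn : 0 < n) (i : ℤ) :
    distinguishedSubgroup Λ F i ≤ ⨆ j : Fin n, distinguishedSubgroup Λ F j := by
  by_cases hi : 0 ≤ i ∧ i < n
  · lift i to ℕ using hi.1
    exact le_iSup_of_le (⟨i, by omega⟩ : Fin n) le_rfl
  · refine le_iSup_of_le (⟨0, hn⟩ : Fin n) (stabOf_le_stabOf Λ ?_)
    rintro _ ⟨j, -, rfl⟩
    exact ⟨j, fun hj => hi ⟨by omega, by omega⟩, rfl⟩

variable {rk : α → ℤ} {Φ : Set α}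

theorem mem_distinguishedSubgroup_of_image_eq (h : IsIncidenceComplex n rk)
    (hΛ : Λ ≤ orderAutGroup α) (hΦ : IsMaxChain (· ≤ ·) Φ) (hFΦ : ∀ j, F j ∈ Φ)
    {ε : Equiv.Perm α} (hε : ε ∈ Λ) {Ψ : Set α} (hΨ : IsChain (· ≤ ·) Ψ) (hεΦ : ε '' Φ = Ψ)
    {i : ℤ} (hi : ∀ j : Fin n, (j : ℤ) ≠ i → F j ∈ Ψ) :
    ε ∈ distinguishedSubgroup Λ F i := by
  refine ⟨hε, ?_⟩
  rintro _ ⟨j, hj, rfl⟩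
  simpa using h.apply_eq_self_of_mem (orderAutGroup.toOrderIso (hΛ hε)) hΦ (hFΦ j) hΨ
    (hi j hj) (by simpa [← hεΦ] using mem_image_of_mem ε (hFΦ j))

theorem exists_mem_iSup_image_eq_of_diff_subset (hn : 0 < n) (h : IsIncidenceComplex n rk)
    (hΛ : Λ ≤ orderAutGroup α) (htrans : FlagTransitive Λ) (hΦ : IsMaxChain (· ≤ ·) Φ)
    (hF : ∀ j : Fin n, F j ∈ Φ ∧ rk (F j) = j)
    {δ : Equiv.Perm α} (hδ : δ ∈ ⨆ j : Fin n, distinguishedSubgroup Λ F j)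
    {Ψ : Set α} (hΨ : IsMaxChain (· ≤ ·) Ψ) {X : α} (hsub : δ '' Φ \ {X} ⊆ Ψ) :
    ∃ δ' ∈ ⨆ j : Fin n, distinguishedSubgroup Λ F j, δ' '' Φ = Ψ := by
  have hδinv : δ⁻¹ ∈ Λ := Λ.inv_mem (iSup_distinguishedSubgroup_le hδ)
  have hΨ' : IsMaxChain (· ≤ ·) (⇑δ⁻¹ '' Ψ) := by
    simpa using hΨ.image (orderAutGroup.toOrderIso (hΛ hδinv))
  obtain ⟨ε, hε, hεΦ⟩ := htrans Φ _ hΦ hΨ'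
  have hεR : ε ∈ distinguishedSubgroup Λ F (rk (δ⁻¹ X)) := by
    refine mem_distinguishedSubgroup_of_image_eq h hΛ hΦ (fun j => (hF j).1) hε hΨ'.1 hεΦ
      fun j hj => ⟨δ (F j), hsub ⟨mem_image_of_mem δ (hF j).1, ?_⟩, by simp⟩
    rintro (hX : δ (F j) = X)
    exact hj (by simp [← hX, (hF j).2])
  refine ⟨δ * ε, Subgroup.mul_mem _ hδ (distinguishedSubgroup_le_iSup hn _ hεR), ?_⟩
  rw [Equiv.Perm.coe_mul, image_comp, hεΦ, image_image]
  simp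

theorem exists_mem_iSup_image_eq_of_reflTransGen (hn : 0 < n) (h : IsIncidenceComplex n rk)
    (hΛ : Λ ≤ orderAutGroup α) (htrans : FlagTransitive Λ) (hΦ : IsMaxChain (· ≤ ·) Φ)
    (hF : ∀ j : Fin n, F j ∈ Φ ∧ rk (F j) = j) {Ψ : Set α}
    (hΨ : Relation.ReflTransGen (fun A B => IsMaxChain (· ≤ ·) B ∧ ∃ X, A \ {X} ⊆ B) Φ Ψ) :
    ∃ δ ∈ ⨆ j : Fin n, distinguishedSubgroup Λ F j, δ '' Φ = Ψ := by
  induction hΨ with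
  | refl => exact ⟨1, Subgroup.one_mem _, by simp⟩
  | tail _ hstep ih =>
    obtain ⟨δ, hδ, rfl⟩ := ih
    obtain ⟨hB, X, hsub⟩ := hstep
    exact exists_mem_iSup_image_eq_of_diff_subset hn h hΛ htrans hΦ hF hδ hB hsub

end Distinguished

/-- If `Λ` is a flag-transitive group of automorphisms of a regular incidence
complex of rank `n` with base flag `Φ` containing the faces `F 0, …, F (n-1)` (of ranks
`0,…,n-1`), and `R i` is the stabilizer in `Λ` of `Φ` minus its `i`-face, then `Λ` is
generated by `R 0, …, R (n-1)`. -/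
theorem flagTransitive_generated_by_distinguished
    {α : Type u} [PartialOrder α] {n : ℕ} (hn : 0 < n) (rk : α → ℤ)
    (h : IsIncidenceComplex n rk)
    (Λ : Subgroup (Equiv.Perm α)) (hΛ : Λ ≤ orderAutGroup α)
    (htrans : FlagTransitive Λ)
    (Φ : Set α) (hΦ : IsMaxChain (· ≤ ·) Φ)
    (F : Fin n → α) (hF : ∀ i : Fin n, F i ∈ Φ ∧ rk (F i) = (i : ℤ)) :
    Λ = ⨆ i : Fin n, distinguishedSubgroup Λ F (i : ℤ) := by
  refine le_antisymm (fun γ hγ => ?_) iSup_distinguishedSubgroup_le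
  have hγΦ : IsMaxChain (· ≤ ·) (⇑γ '' Φ) := by
    simpa using hΦ.image (orderAutGroup.toOrderIso (hΛ hγ))
  obtain ⟨δ, hδ, hδΦ⟩ := exists_mem_iSup_image_eq_of_reflTransGen hn h hΛ htrans hΦ hF <|
    Relation.ReflTransGen.mono
      (fun _ _ ⟨_, hB, _, _, X, _, _, _, _, hAB⟩ => ⟨hB, X, hAB ▸ Set.sdiff_subset⟩) _ _
      (h.strongly_connected Φ _ hΦ hγΦ)
  have hσ : δ⁻¹ * γ ∈ Λ := Λ.mul_mem (Λ.inv_mem (iSup_distinguishedSubgroup_le hδ)) hγ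
  have hσΦ : ⇑(δ⁻¹ * γ) '' Φ = Φ := by
    rw [Equiv.Perm.coe_mul, Set.image_comp, ← hδΦ, Set.image_image]
    simp
  have hσR := mem_distinguishedSubgroup_of_image_eq (i := -1) h hΛ hΦ (fun j => (hF j).1) hσ
    hΦ.1 hσΦ fun j _ => (hF j).1
  simpa using Subgroup.mul_mem _ hδ (distinguishedSubgroup_le_iSup hn _ hσR)
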